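/- Let Q be a quiver with vertex set Q_0 and arrow set Q_1, with symmetrised Euler form (d,e)_Q = 2·Σ_{i∈Q_0} d_i e_i − Σ_{a∈Q_1}(d_{s(a)} e_{t(a)} + d_{t(a)} e_{s(a)}) on ℕ^{Q_0}. If d belongs to the set of primitive positive roots Σ_{Π_Q} (i.e., d ≠ 0, 2−(d,d)_Q ≥ 0, and 2−(d,d)_Q > Σ_j(2−(d_j,d_j)_Q) for every nontrivial decomposition d = Σ d_j into nonzero d_j ∈ ℕ^{Q_0}), then the support of d (the set of vertices i with d_i ≠ 0) is connected as a subgraph of the underlying graph of Q. -/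

import Mathlib

/-! A splitting `d = d₁ + d₂` along two parts of the support joined by no arrow is orthogonal
for the symmetrised Euler form, so `2 - (d,d) = (2 - (d₁,d₁)) + (2 - (d₂,d₂)) - 2`, which
contradicts the strict inequality that defines a primitive root. -/

/-- Primitive positive roots for `(M, B)`. -/
def IsPrimRoot {M : Type} [AddCommMonoid M] (B : M → M → ℤ) (m : M) : Prop :=
  m ≠ 0 ∧ 0 ≤ 2 - B m m ∧
    ∀ l : List M, 2 ≤ l.length → (∀ x ∈ l, x ≠ 0) → l.sum = m →
      (l.map fun x => 2 - B x x).sum < 2 - B m m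

/-- The symmetrised Euler form of a quiver with vertex set `V`, arrow set `A`,
source `s` and target `t`, evaluated on dimension vectors in `ℕ^V`:
`(d,e)_Q = 2·Σ_i d_i e_i − Σ_a (d_{s a} e_{t a} + d_{t a} e_{s a})`. -/
def symEuler {V A : Type} [Fintype V] [Fintype A] (s t : A → V) (d e : V → ℕ) : ℤ :=
  2 * ∑ i, (d i : ℤ) * (e i : ℤ)
    - ∑ a, ((d (s a) : ℤ) * (e (t a) : ℤ) + (d (t a) : ℤ) * (e (s a) : ℤ))

theorem IsPrimRoot.add_lt {M : Type} [AddCommMonoid M] {B : M → M → ℤ} {m x y : M}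
    (hm : IsPrimRoot B m) (hxy : x + y = m) (hx : x ≠ 0) (hy : y ≠ 0) :
    (2 - B x x) + (2 - B y y) < 2 - B m m := by
  simpa using hm.2.2 [x, y] le_rfl (by simp [hx, hy]) (by simpa using hxy)

section symEuler

variable {V A : Type} [Fintype V] [Fintype A] (s t : A → V)

theorem symEuler_comm (d e : V → ℕ) : symEuler s t d e = symEuler s t e d := by
  unfold symEuler
  congr 1
  · simp only [mul_comm]
  · exact Finset.sum_congr rfl fun _ _ => by ring

theorem symEuler_add_left (d d' e : V → ℕ) :
    symEuler s t (d + d') e = symEuler s t d e + symEuler s t d' e := by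
  simp only [symEuler, Pi.add_apply, Nat.cast_add, add_mul, Finset.sum_add_distrib]
  ring

theorem symEuler_add_add_self (d e : V → ℕ) :
    symEuler s t (d + e) (d + e) = symEuler s t d d + symEuler s t e e + 2 * symEuler s t d e := by
  rw [symEuler_add_left, symEuler_comm s t d, symEuler_comm s t e, symEuler_add_left,
    symEuler_add_left, symEuler_comm s t e d]
  ring

theorem symEuler_indicator_eq_zero {S T : Set V} (hST : Disjoint S T)
    (hA : ∀ a, (s a ∈ S → t a ∉ T) ∧ (s a ∈ T → t a ∉ S)) (d e : V → ℕ) :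
    symEuler s t (S.indicator d) (T.indicator e) = 0 := by
  have hprod : ∀ x y, (x ∈ S → y ∉ T) → ((S.indicator d x : ℕ) : ℤ) * T.indicator e y = 0 := by
    intro x y h
    by_cases hx : x ∈ S
    · simp [Set.indicator_of_notMem (h hx)]
    · simp [hx]
  unfold symEuler
  rw [Finset.sum_eq_zero fun i _ => hprod i i fun hi => Set.disjoint_left.mp hST hi,
    Finset.sum_eq_zero fun a _ => by
      rw [hprod _ _ (hA a).1, hprod _ _ fun ht hs => (hA a).2 hs ht]; simp]
  simp

end symEuler

theorem stmt1 {V A : Type} [Fintype V] [Fintype A] (s t : A → V)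
    (d : V → ℕ) (hd : IsPrimRoot (symEuler s t) d) :
    ∀ S T : Set V, S ∪ T = {i | d i ≠ 0} → Disjoint S T → S.Nonempty → T.Nonempty →
      ∃ a : A, (s a ∈ S ∧ t a ∈ T) ∨ (s a ∈ T ∧ t a ∈ S) := by
  intro S T hST hdisj ⟨i, hi⟩ ⟨j, hj⟩
  by_contra! hA
  have hsplit : S.indicator d + T.indicator d = d :=
    calc S.indicator d + T.indicator d = (S ∪ T).indicator d :=
          (Set.indicator_union_of_disjoint hdisj d).symm
      _ = d := hST ▸ Set.indicator_support
  have hsupp : S ∪ T ⊆ Function.support d := hST.le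
  have hdS : S.indicator d ≠ 0 :=
    Function.ne_iff.mpr ⟨i, by simpa [hi] using hsupp (Or.inl hi)⟩
  have hdT : T.indicator d ≠ 0 :=
    Function.ne_iff.mpr ⟨j, by simpa [hj] using hsupp (Or.inr hj)⟩
  have hlt := hd.add_lt hsplit hdS hdT
  have hform := symEuler_add_add_self s t (S.indicator d) (T.indicator d)
  rw [hsplit, symEuler_indicator_eq_zero s t hdisj hA] at hform
  linarith
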